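/- arXiv:1601.05756 — 4 statements merged into one kernel-verified Lean document; each statement's English description precedes it below -/
import Mathlib

section
/- For every ω ∈ Ω and every t ∈ [0,T] it holds that U(Y_t(ω)) ≤ e^{ct}·U(Y_0(ω)) + ∫_0^t e^{c(t−⌊s⌋)}·R(O_{⌊s⌋}(ω)) ds, where the right-hand side is the Lebesgue integral of the nonnegative step function s ↦ e^{c(t−⌊s⌋)}R(O_{⌊s⌋}(ω)) and the inequality is understood in [0,∞]. (Lemma 2.1 of the paper: a priori bound based on variational arguments.) -/
/-!
On the grid cell `(kh, (k+1)h]` the semigroup property turns the mild equation into one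
exponential Euler step from `Y_{kh}`, so the one-step Lyapunov estimate bounds `U(Y_t)` by
`e^{c(t-kh)} (U(Y_{kh}) + (t-kh) R(O_{kh}))`. The right-hand side of the claimed bound satisfies
the same recursion with equality, and induction over the cells gives the bound.
-/

open MeasureTheory Set

/-- `⌊t⌋_h = max({0, h, −h, 2h, −2h, …} ∩ (−∞, t])` for `h > 0`. -/
noncomputable def hfloor (h t : ℝ) : ℝ := h * (⌊t / h⌋ : ℝ)

section hfloor

variable {h : ℝ}

lemma hfloor_nonneg (hh : 0 < h) {t : ℝ} (ht : 0 ≤ t) : 0 ≤ hfloor h t :=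
  mul_nonneg hh.le (mod_cast Int.floor_nonneg.2 (div_nonneg ht hh.le))

lemma hfloor_le (hh : 0 < h) (t : ℝ) : hfloor h t ≤ t := by
  rw [hfloor, ← le_div_iff₀' hh]
  exact Int.floor_le _

lemma hfloor_eq_of_mem_Ico (hh : 0 < h) {k : ℕ} {s : ℝ} (hs : s ∈ Ico (k * h) ((k + 1) * h)) :
    hfloor h s = k * h := by
  have : ⌊s / h⌋ = k := by
    rw [Int.floor_eq_iff, le_div_iff₀ hh, div_lt_iff₀ hh]
    exact_mod_cast hs
  rw [hfloor, this, Int.cast_natCast, mul_comm]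

lemma ae_restrict_Ioc_hfloor_eq (hh : 0 < h) {k : ℕ} {t : ℝ} (ht : t ≤ (k + 1) * h) :
    ∀ᵐ s ∂volume.restrict (Ioc (k * h) t), hfloor h s = k * h := by
  rw [← ae_restrict_congr_set Ioo_ae_eq_Ioc]
  exact ae_restrict_of_forall_mem measurableSet_Ioo fun s hs =>
    hfloor_eq_of_mem_Ico hh ⟨hs.1.le, hs.2.trans_le ht⟩

lemma setIntegral_Ioc_comp_hfloor {E : Type*} [NormedAddCommGroup E] [NormedSpace ℝ E]
    [CompleteSpace E] (hh : 0 < h) (f : ℝ → E) {k : ℕ} {t : ℝ}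
    (ht : t ∈ Icc (k * h) ((k + 1) * h)) :
    ∫ s in Ioc (k * h) t, f (hfloor h s) = (t - k * h) • f (k * h) := by
  rw [integral_congr_ae ((ae_restrict_Ioc_hfloor_eq hh ht.2).mono fun s hs => congrArg f hs),
    setIntegral_const, measureReal_def, Real.volume_Ioc, ENNReal.toReal_ofReal (sub_nonneg.2 ht.1)]

lemma setLIntegral_Ioc_comp_hfloor (hh : 0 < h) (f : ℝ → ENNReal) {k : ℕ} {t : ℝ}
    (ht : t ≤ (k + 1) * h) :
    ∫⁻ s in Ioc (k * h) t, f (hfloor h s) = f (k * h) * ENNReal.ofReal (t - k * h) := by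
  rw [lintegral_congr_ae ((ae_restrict_Ioc_hfloor_eq hh ht).mono fun s hs => congrArg f hs),
    setLIntegral_const, Real.volume_Ioc]

end hfloor

section MildSolution

variable {V W : Type*} [NormedAddCommGroup V] [NormedSpace ℝ V] [CompleteSpace V]
  [NormedAddCommGroup W] [NormedSpace ℝ W]
  {T h : ℝ} {ι : V →L[ℝ] W} {S : ℝ → ℝ → W →L[ℝ] V}
  {φ : ℝ → W} {y : ℝ → V}

lemma mild_eq_euler_step (hh : 0 < h)
    (hS : ∀ r₁ r₂ r₃ : ℝ, 0 ≤ r₁ → r₁ < r₂ → r₂ < r₃ → r₃ ≤ T →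
      S r₁ r₃ = (S r₂ r₃).comp (ι.comp (S r₁ r₂)))
    (hint : ∀ t, 0 < t → t ≤ T →
      IntegrableOn (fun s => S (hfloor h s) t (φ (hfloor h s))) (Ioc 0 t))
    (hy : ∀ t, 0 < t → t ≤ T →
      y t = S 0 t (ι (y 0)) + ∫ s in Ioc 0 t, S (hfloor h s) t (φ (hfloor h s)))
    {k : ℕ} {t : ℝ} (ht : t ∈ Ioc (k * h) ((k + 1) * h)) (htT : t ≤ T) :
    y t = S (k * h) t (ι (y (k * h)) + (t - k * h) • φ (k * h)) := by
  have hlast := setIntegral_Ioc_comp_hfloor hh (fun r => S r t (φ r)) ⟨ht.1.le, ht.2⟩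
  rcases k.eq_zero_or_pos with rfl | hk
  · simp only [Nat.cast_zero, zero_mul, sub_zero] at ht hlast ⊢
    rw [hy t ht.1 htT, hlast, map_add, map_smul]
  set a : ℝ := k * h
  have ha : 0 < a := by positivity
  have haT : a ≤ T := ht.1.le.trans htT
  have hfirst : ∫ s in Ioc 0 a, S (hfloor h s) t (φ (hfloor h s)) =
      S a t (ι (∫ s in Ioc 0 a, S (hfloor h s) a (φ (hfloor h s)))) := by
    have hsemi : ∀ᵐ s ∂volume.restrict (Ioc 0 a),
        S (hfloor h s) t (φ (hfloor h s)) =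
          (S a t).comp ι (S (hfloor h s) a (φ (hfloor h s))) := by
      rw [← ae_restrict_congr_set Ioo_ae_eq_Ioc]
      refine ae_restrict_of_forall_mem measurableSet_Ioo fun s hs => ?_
      rw [hS _ a t (hfloor_nonneg hh hs.1.le) ((hfloor_le hh s).trans_lt hs.2) ht.1 htT]
      rfl
    rw [integral_congr_ae hsemi, ContinuousLinearMap.integral_comp_comm _ (hint a ha haT)]
    rfl
  have hint_t := hint t (ha.trans ht.1) htT
  rw [hy t (ha.trans ht.1) htT, ← Ioc_union_Ioc_eq_Ioc ha.le ht.1.le,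
    setIntegral_union (Ioc_disjoint_Ioc_of_le le_rfl) measurableSet_Ioc
      (hint_t.mono_set (Ioc_subset_Ioc_right ht.1.le))
      (hint_t.mono_set (Ioc_subset_Ioc_left ha.le)),
    hfirst, hlast, hy a ha haT, hS 0 a t le_rfl ha ht.1 htT]
  simp only [ContinuousLinearMap.comp_apply, map_add, map_smul]
  abel

end MildSolution

section AprioriBound

variable {h c u₀ : ℝ} {ρ : ℝ → ℝ}

noncomputable def aprioriBound (h c u₀ : ℝ) (ρ : ℝ → ℝ) (t : ℝ) : ENNReal :=
  ENNReal.ofReal (Real.exp (c * t) * u₀) +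
    ∫⁻ s in Ioc 0 t, ENNReal.ofReal (Real.exp (c * (t - hfloor h s)) * ρ (hfloor h s))

lemma aprioriBound_zero : aprioriBound h c u₀ ρ 0 = ENNReal.ofReal u₀ := by
  simp [aprioriBound]

lemma ofReal_exp_mul_ofReal_exp_mul (x y z : ℝ) :
    ENNReal.ofReal (Real.exp x) * ENNReal.ofReal (Real.exp y * z) =
      ENNReal.ofReal (Real.exp (x + y) * z) := by
  rw [← ENNReal.ofReal_mul (Real.exp_nonneg _), ← mul_assoc, ← Real.exp_add]

lemma aprioriBound_eq_of_mem_Icc (hh : 0 < h) {k : ℕ} {t : ℝ}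
    (ht : t ∈ Icc (k * h) ((k + 1) * h)) :
    aprioriBound h c u₀ ρ t = ENNReal.ofReal (Real.exp (c * (t - k * h))) *
      (aprioriBound h c u₀ ρ (k * h) + ENNReal.ofReal ((t - k * h) * ρ (k * h))) := by
  have hhead : ∫⁻ s in Ioc 0 (k * h),
        ENNReal.ofReal (Real.exp (c * (t - hfloor h s)) * ρ (hfloor h s)) =
      ENNReal.ofReal (Real.exp (c * (t - k * h))) * ∫⁻ s in Ioc 0 (k * h),
        ENNReal.ofReal (Real.exp (c * (k * h - hfloor h s)) * ρ (hfloor h s)) := by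
    rw [← lintegral_const_mul' _ _ ENNReal.ofReal_ne_top]
    simp only [ofReal_exp_mul_ofReal_exp_mul, ← mul_add, sub_add_sub_cancel]
  have htail : ∫⁻ s in Ioc (k * h) t,
        ENNReal.ofReal (Real.exp (c * (t - hfloor h s)) * ρ (hfloor h s)) =
      ENNReal.ofReal (Real.exp (c * (t - k * h))) * ENNReal.ofReal ((t - k * h) * ρ (k * h)) := by
    rw [setLIntegral_Ioc_comp_hfloor hh (fun r => ENNReal.ofReal (Real.exp (c * (t - r)) * ρ r))
      ht.2, ENNReal.ofReal_mul (Real.exp_nonneg _), ENNReal.ofReal_mul (sub_nonneg.2 ht.1)]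
    ring
  rw [aprioriBound, aprioriBound, ← Ioc_union_Ioc_eq_Ioc (by positivity) ht.1,
    lintegral_union measurableSet_Ioc (Ioc_disjoint_Ioc_of_le le_rfl), hhead, htail,
    mul_add, mul_add, ofReal_exp_mul_ofReal_exp_mul, ← mul_add c, sub_add_cancel]
  ring

lemma ofReal_le_aprioriBound (hh : 0 < h) {M : ℕ} {u : ℝ → ℝ}
    (hstep : ∀ k : ℕ, k < M → ∀ t ∈ Ioc (k * h) ((k + 1) * h),
      u t ≤ Real.exp (c * (t - k * h)) * (u (k * h) + (t - k * h) * ρ (k * h))) :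
    ∀ t ∈ Icc 0 (M * h), ENNReal.ofReal (u t) ≤ aprioriBound h c (u 0) ρ t := by
  induction M with
  | zero =>
    intro t ht
    obtain rfl : t = 0 := by simpa using ht
    rw [aprioriBound_zero]
  | succ k ih =>
    specialize ih fun j hj => hstep j (hj.trans k.lt_succ_self)
    intro t ht
    rcases le_or_gt t (k * h) with htk | htk
    · exact ih t ⟨ht.1, htk⟩
    have ht' : t ∈ Ioc (k * h) ((k + 1) * h) := ⟨htk, by exact_mod_cast ht.2⟩
    calc ENNReal.ofReal (u t)
        ≤ ENNReal.ofReal (Real.exp (c * (t - k * h)) * (u (k * h) + (t - k * h) * ρ (k * h))) :=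
          ENNReal.ofReal_le_ofReal (hstep k k.lt_succ_self t ht')
      _ ≤ ENNReal.ofReal (Real.exp (c * (t - k * h))) *
            (ENNReal.ofReal (u (k * h)) + ENNReal.ofReal ((t - k * h) * ρ (k * h))) := by
          rw [ENNReal.ofReal_mul (Real.exp_nonneg _)]
          gcongr
          exact ENNReal.ofReal_add_le
      _ ≤ ENNReal.ofReal (Real.exp (c * (t - k * h))) *
            (aprioriBound h c (u 0) ρ (k * h) + ENNReal.ofReal ((t - k * h) * ρ (k * h))) := by
          gcongr
          exact ih _ ⟨by positivity, le_rfl⟩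
      _ = aprioriBound h c (u 0) ρ t := (aprioriBound_eq_of_mem_Icc hh ⟨ht'.1.le, ht'.2⟩).symm

end AprioriBound

theorem stmt0_general
    (T c : ℝ) (hT : 0 < T)
    (M : ℕ) (hM : 0 < M)
    {V W : Type*}
    [NormedAddCommGroup V] [NormedSpace ℝ V] [CompleteSpace V]
    [NormedAddCommGroup W] [NormedSpace ℝ W]
    (ι : V →L[ℝ] W)
    (U R Vm : V → ℝ)
    (F : V → W)
    (S : ℝ → ℝ → (W →L[ℝ] V))
    (hSsemi : ∀ r1 r2 r3 : ℝ, 0 ≤ r1 → r1 < r2 → r2 < r3 → r3 ≤ T →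
      S r1 r3 = (S r2 r3).comp (ι.comp (S r1 r2)))
    (hLyap : ∀ u v : V, ∀ k : ℕ, k < M → ∀ t : ℝ,
      (k : ℝ) * T / M < t → t ≤ ((k : ℝ) + 1) * T / M →
      U (S ((k : ℝ) * T / M) t
          (ι u + (t - (k : ℝ) * T / M) •
            (if Vm (u + v) ≤ (M : ℝ) / T then F (u + v) else 0)))
        ≤ Real.exp (c * (t - (k : ℝ) * T / M)) * (U u + (t - (k : ℝ) * T / M) * R v))
    {Ω : Type*}
    (O Y : ℝ → Ω → V)
    (hYint : ∀ ω : Ω, ∀ t : ℝ, 0 < t → t ≤ T →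
      IntegrableOn
        (fun s => S (hfloor (T / M) s) t
          (if Vm (Y (hfloor (T / M) s) ω + O (hfloor (T / M) s) ω) ≤ (M : ℝ) / T
            then F (Y (hfloor (T / M) s) ω + O (hfloor (T / M) s) ω) else 0))
        (Set.Ioc 0 t))
    (hYeq : ∀ ω : Ω, ∀ t : ℝ, 0 < t → t ≤ T →
      Y t ω = S 0 t (ι (Y 0 ω)) +
        ∫ s in Set.Ioc (0 : ℝ) t, S (hfloor (T / M) s) t
          (if Vm (Y (hfloor (T / M) s) ω + O (hfloor (T / M) s) ω) ≤ (M : ℝ) / T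
            then F (Y (hfloor (T / M) s) ω + O (hfloor (T / M) s) ω) else 0)) :
    ∀ ω : Ω, ∀ t ∈ Set.Icc (0 : ℝ) T,
      ENNReal.ofReal (U (Y t ω)) ≤
        ENNReal.ofReal (Real.exp (c * t) * U (Y 0 ω)) +
          ∫⁻ s in Set.Ioc (0 : ℝ) t,
            ENNReal.ofReal
              (Real.exp (c * (t - hfloor (T / M) s)) * R (O (hfloor (T / M) s) ω)) := by
  intro ω t ht
  have hh : 0 < T / M := by positivity
  have hMT : (M : ℝ) * (T / M) = T := mul_div_cancel₀ _ (by positivity)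
  have hstep : ∀ k : ℕ, k < M → ∀ t ∈ Ioc (k * (T / M)) ((k + 1) * (T / M)),
      U (Y t ω) ≤ Real.exp (c * (t - k * (T / M))) *
        (U (Y (k * (T / M)) ω) + (t - k * (T / M)) * R (O (k * (T / M)) ω)) := by
    intro k hk s hs
    have hsT : s ≤ T := calc
      s ≤ (k + 1) * (T / M) := hs.2
      _ ≤ M * (T / M) := by gcongr; exact_mod_cast hk
      _ = T := hMT
    rw [mild_eq_euler_step (y := fun s => Y s ω)
      (φ := fun r => if Vm (Y r ω + O r ω) ≤ (M : ℝ) / T then F (Y r ω + O r ω) else 0)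
      hh hSsemi (hYint ω) (hYeq ω) hs hsT]
    simp only [mul_div_assoc] at hLyap
    exact hLyap _ _ k hk s hs.1 hs.2
  exact ofReal_le_aprioriBound (u := fun s => U (Y s ω)) (ρ := fun r => R (O r ω)) hh hstep t
    (hMT.symm ▸ ht)

theorem stmt0
    (T q c C : ℝ) (hT : 0 < T) (hq : 0 < q) (hc : 0 ≤ c) (hC : 0 ≤ C)
    (M : ℕ) (hM : 0 < M)
    {V W : Type*}
    [NormedAddCommGroup V] [NormedSpace ℝ V] [CompleteSpace V]
    [TopologicalSpace.SeparableSpace V] [MeasurableSpace V] [BorelSpace V]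
    [NormedAddCommGroup W] [NormedSpace ℝ W] [CompleteSpace W]
    [TopologicalSpace.SeparableSpace W] [MeasurableSpace W] [BorelSpace W]
    (ι : V →L[ℝ] W) (hι_inj : Function.Injective ι) (hι_dense : DenseRange ι)
    (U R Vm : V → ℝ)
    (hU0 : ∀ v, 0 ≤ U v) (hR0 : ∀ v, 0 ≤ R v) (hVm0 : ∀ v, 0 ≤ Vm v)
    (hUm : Measurable U) (hRm : Measurable R) (hVmm : Measurable Vm)
    (F : V → W) (hFm : Measurable F)
    (S : ℝ → ℝ → (W →L[ℝ] V))
    (hSm : ∀ w : W, Measurable fun p : ℝ × ℝ => S p.1 p.2 w)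
    (hFgrowth : ∀ u v : V, ‖F (u + v)‖ ≤ C * (1 + U u ^ q + U v ^ q))
    (hSsemi : ∀ r1 r2 r3 : ℝ, 0 ≤ r1 → r1 < r2 → r2 < r3 → r3 ≤ T →
      S r1 r3 = (S r2 r3).comp (ι.comp (S r1 r2)))
    (hLyap : ∀ u v : V, ∀ k : ℕ, k < M → ∀ t : ℝ,
      (k : ℝ) * T / M < t → t ≤ ((k : ℝ) + 1) * T / M →
      U (S ((k : ℝ) * T / M) t
          (ι u + (t - (k : ℝ) * T / M) •
            (if Vm (u + v) ≤ (M : ℝ) / T then F (u + v) else 0)))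
        ≤ Real.exp (c * (t - (k : ℝ) * T / M)) * (U u + (t - (k : ℝ) * T / M) * R v))
    {Ω : Type*} [MeasurableSpace Ω] (P : Measure Ω) [IsProbabilityMeasure P]
    (O Y : ℝ → Ω → V)
    (hYint : ∀ ω : Ω, ∀ t : ℝ, 0 < t → t ≤ T →
      IntegrableOn
        (fun s => S (hfloor (T / M) s) t
          (if Vm (Y (hfloor (T / M) s) ω + O (hfloor (T / M) s) ω) ≤ (M : ℝ) / T
            then F (Y (hfloor (T / M) s) ω + O (hfloor (T / M) s) ω) else 0))
        (Set.Ioc 0 t))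
    (hYeq : ∀ ω : Ω, ∀ t : ℝ, 0 < t → t ≤ T →
      Y t ω = S 0 t (ι (Y 0 ω)) +
        ∫ s in Set.Ioc (0 : ℝ) t, S (hfloor (T / M) s) t
          (if Vm (Y (hfloor (T / M) s) ω + O (hfloor (T / M) s) ω) ≤ (M : ℝ) / T
            then F (Y (hfloor (T / M) s) ω + O (hfloor (T / M) s) ω) else 0)) :
    ∀ ω : Ω, ∀ t ∈ Set.Icc (0 : ℝ) T,
      ENNReal.ofReal (U (Y t ω)) ≤
        ENNReal.ofReal (Real.exp (c * t) * U (Y 0 ω)) +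
          ∫⁻ s in Set.Ioc (0 : ℝ) t,
            ENNReal.ofReal
              (Real.exp (c * (t - hfloor (T / M) s)) * R (O (hfloor (T / M) s) ω)) :=
  stmt0_general T c hT M hM ι U R Vm F S hSsemi hLyap O Y hYint hYeq
end

section
/- Let q ∈ {2n, 2n+2, 2n+4, …} and let v, w : D → ℝ be measurable with ‖v‖_{L^{nq}} < ∞ and ‖w‖_{L^{nq}} < ∞. Then ‖F̂(v+w)‖_{L²} ≤ 2^{n+1} · sqrt(max{1, λ_D(D)}) · ( max_{k∈{0,1,…,n}} |a_k| ) · ( 1 + ‖v‖_{L^q}^{q/2} + ‖w‖_{L^q}^{q/2} ). (Lemma 6.6 of the paper: growth bound for the polynomial nonlinearity.) -/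
/-!
Write `q = 2N` with `N ≥ n` and `M = max_k |a_k|`. For `t ≥ 0` and `k ≤ N`,
`t^k = 2^k (t/2)^k ≤ 2^k (1 + (t/2)^N)`, and `|x + y| / 2 ≤ max |x| |y|`; summing over `k ≤ n` gives
the pointwise bound `|F̂(v + w)| ≤ 2^(n+1) M (1 + |v|^N + |w|^N)`. Minkowski in `L²` together with
`‖|v|^N‖_{L²} = ‖v‖_{L^q}^N` then gives the estimate; the `L^q` norms are finite because `q ≤ nq`
and the box has finite measure.
-/

open MeasureTheory
open scoped ENNReal

/-- The open box `D = (b1, b2)^d ⊆ ℝ^d`. -/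
def box (d : ℕ) (b1 b2 : ℝ) : Set (Fin d → ℝ) :=
  Set.univ.pi fun _ => Set.Ioo b1 b2

/-- The `L^r(λ_D; ℝ)`-norm (as a real number, `∞` being sent to `0` by `toReal`;
all norms appearing below are finite under the stated hypotheses). -/
noncomputable def lpN (d : ℕ) (b1 b2 : ℝ) (r : ℝ) (u : (Fin d → ℝ) → ℝ) : ℝ :=
  (eLpNorm u (ENNReal.ofReal r) (volume.restrict (box d b1 b2))).toReal

/-- The polynomial Nemytskii operation `F̂(u) = Σ_{k=0}^n a_k u^k` (pointwise). -/
noncomputable def Fpoly (d n : ℕ) (a : ℕ → ℝ) (u : (Fin d → ℝ) → ℝ) :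
    (Fin d → ℝ) → ℝ :=
  fun x => ∑ k ∈ Finset.range (n + 1), a k * u x ^ k

theorem pow_le_one_add_pow {t : ℝ} (ht : 0 ≤ t) {k N : ℕ} (hkN : k ≤ N) : t ^ k ≤ 1 + t ^ N := by
  rcases le_total t 1 with h | h
  · linarith [pow_le_one₀ ht h (n := k), pow_nonneg ht N]
  · linarith [pow_le_pow_right₀ h hkN]

theorem sum_range_pow_le_two_pow_mul {t : ℝ} (ht : 0 ≤ t) {n N : ℕ} (hnN : n ≤ N) :
    ∑ k ∈ Finset.range (n + 1), t ^ k ≤ 2 ^ (n + 1) * (1 + (t / 2) ^ N) := by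
  have hgeom : ∑ k ∈ Finset.range (n + 1), (2 : ℝ) ^ k ≤ 2 ^ (n + 1) := by
    rw [geom_sum_eq (by norm_num)]; norm_num
  calc ∑ k ∈ Finset.range (n + 1), t ^ k = ∑ k ∈ Finset.range (n + 1), 2 ^ k * (t / 2) ^ k := by
        refine Finset.sum_congr rfl fun k _ => ?_
        rw [← mul_pow, mul_div_cancel₀ t two_ne_zero]
    _ ≤ ∑ k ∈ Finset.range (n + 1), 2 ^ k * (1 + (t / 2) ^ N) := by
        refine Finset.sum_le_sum fun k hk => ?_
        gcongr
        exact pow_le_one_add_pow (by positivity) (by simp at hk; omega)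
    _ = (∑ k ∈ Finset.range (n + 1), (2 : ℝ) ^ k) * (1 + (t / 2) ^ N) := by rw [Finset.sum_mul]
    _ ≤ 2 ^ (n + 1) * (1 + (t / 2) ^ N) := by gcongr

theorem half_abs_add_pow_le (x y : ℝ) (N : ℕ) : (|x + y| / 2) ^ N ≤ |x| ^ N + |y| ^ N := by
  have hmax : |x + y| / 2 ≤ max |x| |y| := by
    linarith [abs_add_le x y, le_max_left |x| |y|, le_max_right |x| |y|]
  calc (|x + y| / 2) ^ N ≤ max |x| |y| ^ N := by gcongr
    _ ≤ |x| ^ N + |y| ^ N := by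
        rcases max_choice |x| |y| with h | h <;> rw [h] <;> simp [pow_nonneg, abs_nonneg]

theorem abs_sum_mul_pow_le {n : ℕ} {a : ℕ → ℝ} {M : ℝ}
    (ha : ∀ k ∈ Finset.range (n + 1), |a k| ≤ M) (x : ℝ) :
    |∑ k ∈ Finset.range (n + 1), a k * x ^ k| ≤ M * ∑ k ∈ Finset.range (n + 1), |x| ^ k := by
  rw [Finset.mul_sum]
  refine (Finset.abs_sum_le_sum_abs _ _).trans (Finset.sum_le_sum fun k hk => ?_)
  rw [abs_mul, abs_pow]
  exact mul_le_mul_of_nonneg_right (ha k hk) (by positivity)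

theorem abs_sum_mul_add_pow_le {n N : ℕ} {a : ℕ → ℝ} {M : ℝ}
    (ha : ∀ k ∈ Finset.range (n + 1), |a k| ≤ M) (hnN : n ≤ N) (x y : ℝ) :
    |∑ k ∈ Finset.range (n + 1), a k * (x + y) ^ k| ≤
      2 ^ (n + 1) * M * (1 + |x| ^ N + |y| ^ N) := by
  have hM : 0 ≤ M := (abs_nonneg _).trans (ha 0 (by simp))
  calc |∑ k ∈ Finset.range (n + 1), a k * (x + y) ^ k|
      ≤ M * ∑ k ∈ Finset.range (n + 1), |x + y| ^ k := abs_sum_mul_pow_le ha _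
    _ ≤ M * (2 ^ (n + 1) * (1 + (|x + y| / 2) ^ N)) := by
        gcongr; exact sum_range_pow_le_two_pow_mul (abs_nonneg _) hnN
    _ ≤ M * (2 ^ (n + 1) * (1 + (|x| ^ N + |y| ^ N))) := by
        gcongr; exact half_abs_add_pow_le x y N
    _ = 2 ^ (n + 1) * M * (1 + |x| ^ N + |y| ^ N) := by ring

section Measure

variable {α : Type*} [MeasurableSpace α] {μ : Measure α}

theorem eLpNorm_abs_pow_two (f : α → ℝ) {N : ℕ} (hN : 0 < N) :
    eLpNorm (fun x => |f x| ^ N) 2 μ = eLpNorm f (2 * N) μ ^ N := by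
  have h := eLpNorm_norm_rpow (p := 2) (μ := μ) f (q := N) (by exact_mod_cast hN)
  simpa [Real.norm_eq_abs, Real.rpow_natCast] using h

theorem eLpNorm_one_add_abs_pow_add_abs_pow_le {f g : α → ℝ} (hf : AEStronglyMeasurable f μ)
    (hg : AEStronglyMeasurable g μ) {N : ℕ} (hN : 0 < N) :
    eLpNorm (fun x => 1 + |f x| ^ N + |g x| ^ N) 2 μ ≤
      μ Set.univ ^ (1 / 2 : ℝ) + eLpNorm f (2 * N) μ ^ N + eLpNorm g (2 * N) μ ^ N := by
  have hfN : AEStronglyMeasurable (fun x => |f x| ^ N) μ := hf.norm.pow N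
  have hgN : AEStronglyMeasurable (fun x => |g x| ^ N) μ := hg.norm.pow N
  calc eLpNorm (fun x => 1 + |f x| ^ N + |g x| ^ N) 2 μ
      ≤ eLpNorm (fun _ => (1 : ℝ)) 2 μ + eLpNorm (fun x => |f x| ^ N) 2 μ
          + eLpNorm (fun x => |g x| ^ N) 2 μ := by
        refine (eLpNorm_add_le (aestronglyMeasurable_const.add hfN) hgN one_le_two).trans ?_
        gcongr
        exact eLpNorm_add_le aestronglyMeasurable_const hfN one_le_two
    _ = _ := by
        rw [eLpNorm_const' _ two_ne_zero ENNReal.ofNat_ne_top, eLpNorm_abs_pow_two f hN,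
          eLpNorm_abs_pow_two g hN]
        simp

theorem eLpNorm_sum_mul_add_pow_le {f g : α → ℝ} (hf : AEStronglyMeasurable f μ)
    (hg : AEStronglyMeasurable g μ) {n N : ℕ} {a : ℕ → ℝ} {M : ℝ}
    (ha : ∀ k ∈ Finset.range (n + 1), |a k| ≤ M) (hnN : n ≤ N) (hN : 0 < N) :
    eLpNorm (fun x => ∑ k ∈ Finset.range (n + 1), a k * (f x + g x) ^ k) 2 μ ≤
      ENNReal.ofReal (2 ^ (n + 1) * M) *
        (μ Set.univ ^ (1 / 2 : ℝ) + eLpNorm f (2 * N) μ ^ N + eLpNorm g (2 * N) μ ^ N) := by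
  refine (eLpNorm_le_mul_eLpNorm_of_ae_le_mul (c := 2 ^ (n + 1) * M)
    (g := fun x => 1 + |f x| ^ N + |g x| ^ N) (ae_of_all _ fun x => ?_) 2).trans ?_
  · rw [Real.norm_eq_abs, Real.norm_of_nonneg (by positivity)]
    exact abs_sum_mul_add_pow_le ha hnN (f x) (g x)
  · gcongr
    exact eLpNorm_one_add_abs_pow_add_abs_pow_le hf hg hN

theorem toReal_eLpNorm_sum_mul_add_pow_le [IsFiniteMeasure μ] {f g : α → ℝ} {N : ℕ}
    (hf : MemLp f (2 * N) μ) (hg : MemLp g (2 * N) μ) {n : ℕ} {a : ℕ → ℝ} {M : ℝ}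
    (ha : ∀ k ∈ Finset.range (n + 1), |a k| ≤ M) (hnN : n ≤ N) (hN : 0 < N) :
    (eLpNorm (fun x => ∑ k ∈ Finset.range (n + 1), a k * (f x + g x) ^ k) 2 μ).toReal ≤
      2 ^ (n + 1) * M * (Real.sqrt (μ Set.univ).toReal + (eLpNorm f (2 * N) μ).toReal ^ N +
        (eLpNorm g (2 * N) μ).toReal ^ N) := by
  have hM : 0 ≤ M := (abs_nonneg _).trans (ha 0 (by simp))
  refine ENNReal.toReal_le_of_le_ofReal (by positivity) <|
    (eLpNorm_sum_mul_add_pow_le hf.1 hg.1 ha hnN hN).trans_eq ?_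
  rw [ENNReal.ofReal_mul (p := 2 ^ (n + 1) * M) (by positivity),
    ENNReal.ofReal_add (by positivity) (by positivity),
    ENNReal.ofReal_add (by positivity) (by positivity), ENNReal.ofReal_pow ENNReal.toReal_nonneg,
    ENNReal.ofReal_pow ENNReal.toReal_nonneg, ENNReal.ofReal_toReal hf.2.ne,
    ENNReal.ofReal_toReal hg.2.ne, Real.sqrt_eq_rpow,
    ← ENNReal.ofReal_rpow_of_nonneg ENNReal.toReal_nonneg (by norm_num),
    ENNReal.ofReal_toReal (measure_ne_top μ _)]

end Measure

theorem sqrt_add_add_le_sqrt_max_one_mul (t : ℝ) {x y : ℝ} (hx : 0 ≤ x) (hy : 0 ≤ y) :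
    √t + x + y ≤ √(max 1 t) * (1 + x + y) := by
  have hs : 1 ≤ √(max 1 t) := Real.one_le_sqrt.2 (le_max_left 1 t)
  have ht : √t ≤ √(max 1 t) := Real.sqrt_le_sqrt (le_max_right 1 t)
  nlinarith

theorem volume_box_ne_top (d : ℕ) (b1 b2 : ℝ) : volume (box d b1 b2) ≠ ∞ := by
  simp [box, Real.volume_pi_Ioo]

theorem stmt10_general
    (d : ℕ) (n : ℕ) (hn : Odd n)
    (a : ℕ → ℝ) (b1 b2 : ℝ)
    (q : ℕ) (hq : ∃ m : ℕ, q = 2 * n + 2 * m)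
    (v w : (Fin d → ℝ) → ℝ) (hvm : Measurable v) (hwm : Measurable w)
    (hv : eLpNorm v (ENNReal.ofReal ((n : ℝ) * q)) (volume.restrict (box d b1 b2)) < ⊤)
    (hw : eLpNorm w (ENNReal.ofReal ((n : ℝ) * q)) (volume.restrict (box d b1 b2)) < ⊤) :
    lpN d b1 b2 2 (Fpoly d n a (fun y => v y + w y)) ≤
      2 ^ (n + 1) * Real.sqrt (max 1 (volume (box d b1 b2)).toReal) *
        ((Finset.range (n + 1)).sup' Finset.nonempty_range_add_one fun k => |a k|) *
        (1 + lpN d b1 b2 (q : ℝ) v ^ ((q : ℝ) / 2) +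
          lpN d b1 b2 (q : ℝ) w ^ ((q : ℝ) / 2)) := by
  obtain ⟨N, hnN, rfl⟩ : ∃ N, n ≤ N ∧ q = 2 * N := by
    obtain ⟨m, rfl⟩ := hq
    exact ⟨n + m, by omega, by ring⟩
  set μ := volume.restrict (box d b1 b2)
  have : IsFiniteMeasure μ := isFiniteMeasure_restrict.2 (volume_box_ne_top d b1 b2)
  have hq2N : ENNReal.ofReal ((2 * N : ℕ) : ℝ) = 2 * N := by
    rw [ENNReal.ofReal_natCast]; push_cast; rfl
  have hqn : ENNReal.ofReal ((2 * N : ℕ) : ℝ) ≤ ENNReal.ofReal (n * (2 * N : ℕ)) :=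
    ENNReal.ofReal_le_ofReal (le_mul_of_one_le_left (by positivity) (by exact_mod_cast hn.pos))
  have hvq : MemLp v (2 * N) μ := hq2N ▸ MemLp.mono_exponent ⟨hvm.aestronglyMeasurable, hv⟩ hqn
  have hwq : MemLp w (2 * N) μ := hq2N ▸ MemLp.mono_exponent ⟨hwm.aestronglyMeasurable, hw⟩ hqn
  have ha (k) (hk : k ∈ Finset.range (n + 1)) :
      |a k| ≤ (Finset.range (n + 1)).sup' Finset.nonempty_range_add_one fun k => |a k| :=
    Finset.le_sup' (fun k => |a k|) hk
  have hM := (abs_nonneg _).trans (ha 0 (by simp))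
  have key := toReal_eLpNorm_sum_mul_add_pow_le hvq hwq ha hnN (by have := hn.pos; omega)
  rw [Measure.restrict_apply_univ] at key
  have hN : ((2 * N : ℕ) : ℝ) / 2 = N := by push_cast; ring
  simp only [lpN, hN, Real.rpow_natCast, ENNReal.ofReal_ofNat, hq2N]
  refine key.trans (le_of_le_of_eq (mul_le_mul_of_nonneg_left
    (sqrt_add_add_le_sqrt_max_one_mul _ (by positivity) (by positivity)) (by positivity)) ?_)
  ring

theorem stmt10
    (T : ℝ) (hT : 0 < T) (d : ℕ) (hd : 0 < d) (n : ℕ) (hn : Odd n)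
    (a : ℕ → ℝ) (han : a n < 0) (b1 b2 : ℝ) (hb : b1 < b2)
    (q : ℕ) (hq : ∃ m : ℕ, q = 2 * n + 2 * m)
    (v w : (Fin d → ℝ) → ℝ) (hvm : Measurable v) (hwm : Measurable w)
    (hv : eLpNorm v (ENNReal.ofReal ((n : ℝ) * q)) (volume.restrict (box d b1 b2)) < ⊤)
    (hw : eLpNorm w (ENNReal.ofReal ((n : ℝ) * q)) (volume.restrict (box d b1 b2)) < ⊤) :
    lpN d b1 b2 2 (Fpoly d n a (fun y => v y + w y)) ≤
      2 ^ (n + 1) * Real.sqrt (max 1 (volume (box d b1 b2)).toReal) *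
        ((Finset.range (n + 1)).sup' Finset.nonempty_range_add_one fun k => |a k|) *
        (1 + lpN d b1 b2 (q : ℝ) v ^ ((q : ℝ) / 2) +
          lpN d b1 b2 (q : ℝ) w ^ ((q : ℝ) / 2)) :=
  stmt10_general d n hn a b1 b2 q hq v w hvm hwm hv hw
end

section
/- Let v, w : D → ℝ be measurable with ‖v‖_{L^{2n²}} < ∞ and ‖w‖_{L^{2n²}} < ∞. Then the function (v−w)·(F̂(v)−F̂(w)) is λ_D-integrable and ∫_D (v−w)(F̂(v)−F̂(w)) dλ_D ≤ (n−1) · max{1, |a_n|^{2−n}} · max{1, max_{k∈{0,1,…,n−1}} (k|a_k|)^{n−1}} · ‖v−w‖_{L²}². (This is the nonlinearity part of Lemma 6.7 of the paper; the full lemma adds the term ⟨v−w, A(v−w)⟩_{L²} ≤ 0 for the Dirichlet Laplacian A, which requires v−w in the domain of (−A)^{1/2}.) -/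
open MeasureTheory

/-!
With `P(t) = Σ_{k ≤ n} a_k t^k` it suffices to show `P' ≤ c` for the constant `c` of the statement:
then `t ↦ c t - P(t)` is monotone, so `(x - y)(P(x) - P(y)) ≤ c (x - y)^2` pointwise, and this
integrates to the bound. As `n` is odd and `a_n < 0`, the leading term of `P'` is
`-n |a_n| |t|^{n-1}`, while a Young-type inequality bounds each of the `n - 1` lower terms
`k a_k t^{k-1}` by `|a_n| |t|^{n-1} + max{1, |a_n|^{2-n}} · max{1, (k |a_k|)^{n-1}}`.
The integrand is dominated by a multiple of `1 + |v|^E + |w|^E` with `E = 2n² ≥ n + 1`, and `D`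
has finite measure, which gives integrability.
-/

open Finset hiding box

lemma pow_le_max_one_pow {b : ℝ} (hb : 0 ≤ b) {i N : ℕ} (hiN : i ≤ N) :
    b ^ i ≤ max 1 (b ^ N) := by
  rcases le_total b 1 with h | h
  · exact (pow_le_one₀ hb h).trans (le_max_left _ _)
  · exact (pow_le_pow_right₀ h hiN).trans (le_max_right _ _)

lemma mul_pow_le_mul_pow_add {b c m B : ℝ} {i N : ℕ} (hiN : i < N) (hb : 0 ≤ b) (hc : 0 < c)
    (hm : 0 ≤ m) (hB : max 1 (b ^ N) ≤ B) :
    b * m ^ i ≤ c * m ^ N + max 1 (c ^ ((1 : ℝ) - N)) * B := by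
  have hB1 : 1 ≤ B := (le_max_left _ _).trans hB
  have hA1 : 1 ≤ max 1 (c ^ ((1 : ℝ) - N)) := le_max_left _ _
  have hcm : 0 ≤ c * m ^ N := by positivity
  by_cases hlarge : b ≤ c * m ^ (N - i)
  · calc b * m ^ i ≤ c * m ^ (N - i) * m ^ i := by gcongr
      _ = c * m ^ N := by rw [mul_assoc, ← pow_add, Nat.sub_add_cancel hiN.le]
      _ ≤ _ := le_add_of_nonneg_right (by positivity)
  rcases le_total m 1 with hm1 | hm1
  · calc b * m ^ i ≤ b * 1 := by gcongr; exact pow_le_one₀ hm hm1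
      _ ≤ 1 * B := by simpa using (pow_le_max_one_pow hb (by omega : 1 ≤ N)).trans hB
      _ ≤ _ := by nlinarith
  have hmi : m ^ i ≤ (b / c) ^ i :=
    calc m ^ i ≤ (m ^ (N - i)) ^ i := by gcongr; exact le_self_pow₀ hm1 (by omega)
      _ ≤ (b / c) ^ i := by gcongr; rw [le_div_iff₀ hc]; linarith
  have hinv : c ^ ((1 : ℝ) - N) = c⁻¹ ^ (N - 1) := by
    rw [show (1 : ℝ) - N = -((N - 1 : ℕ) : ℝ) by push_cast [Nat.cast_sub hiN.pos]; ring,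
      Real.rpow_neg hc.le, Real.rpow_natCast, inv_pow]
  calc b * m ^ i ≤ b * (b / c) ^ i := by gcongr
    _ = b ^ (i + 1) * c⁻¹ ^ i := by rw [div_pow, inv_pow]; ring
    _ ≤ B * max 1 (c ^ ((1 : ℝ) - N)) := by
        rw [hinv]
        gcongr
        · exact (pow_le_max_one_pow hb (by omega)).trans hB
        · exact pow_le_max_one_pow (by positivity) (by omega)
    _ ≤ _ := by nlinarith

lemma sum_mul_deriv_pow_le {n : ℕ} (hn : Odd n) {a : ℕ → ℝ} (han : a n < 0) {B : ℝ}
    (hB : ∀ k < n, max 1 (((k : ℝ) * |a k|) ^ (n - 1)) ≤ B) (t : ℝ) :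
    ∑ k ∈ range (n + 1), a k * (k * t ^ (k - 1)) ≤
      ((n : ℝ) - 1) * max 1 (|a n| ^ ((2 : ℝ) - n)) * B := by
  obtain ⟨N, rfl⟩ : ∃ N, n = N + 1 := ⟨n - 1, by have := hn.pos; omega⟩
  have hN : Even N := by simpa [Nat.odd_add_one] using hn
  set A := max 1 (|a (N + 1)| ^ ((1 : ℝ) - N))
  have hlead : a (N + 1) * ((N + 1 : ℕ) * t ^ N) = -((N + 1) * (|a (N + 1)| * |t| ^ N)) := by
    rw [hN.pow_abs, abs_of_neg han]; push_cast; ring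
  have hterm : ∀ i ∈ range N,
      a (i + 1) * ((i + 1 : ℕ) * t ^ i) ≤ |a (N + 1)| * |t| ^ N + A * B := fun i hi =>
    calc a (i + 1) * ((i + 1 : ℕ) * t ^ i) ≤ ((i + 1 : ℕ) * |a (i + 1)|) * |t| ^ i := by
          refine (le_abs_self _).trans_eq ?_
          rw [abs_mul, abs_mul, abs_pow, Nat.abs_cast]; ring
      _ ≤ _ := mul_pow_le_mul_pow_add (mem_range.1 hi) (by positivity)
          (abs_pos.2 han.ne) (abs_nonneg t) (hB _ (by simpa using hi))
  have hsum := sum_le_sum hterm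
  rw [sum_const, card_range, nsmul_eq_mul] at hsum
  rw [sum_range_succ, sum_range_succ']
  simp only [Nat.add_sub_cancel, CharP.cast_eq_zero, zero_mul, mul_zero, add_zero]
  rw [hlead, show ((N + 1 : ℕ) : ℝ) - 1 = N by push_cast; ring,
    show (2 : ℝ) - (N + 1 : ℕ) = 1 - N by push_cast; ring]
  have : 0 ≤ |a (N + 1)| * |t| ^ N := by positivity
  nlinarith

lemma sub_mul_sub_le_of_hasDerivAt_le {f f' : ℝ → ℝ} {c : ℝ}
    (hf : ∀ t, HasDerivAt f (f' t) t) (hf' : ∀ t, f' t ≤ c) (x y : ℝ) :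
    (x - y) * (f x - f y) ≤ c * (x - y) ^ 2 := by
  have hg : ∀ t, HasDerivAt (fun t => c * t - f t) (c - f' t) t := fun t => by
    simpa using ((hasDerivAt_id t).const_mul c).fun_sub (hf t)
  have hmono : Monotone fun t => c * t - f t :=
    monotone_of_deriv_nonneg (fun t => (hg t).differentiableAt)
      fun t => (hg t).deriv ▸ sub_nonneg.2 (hf' t)
  have : 0 ≤ (c * x - f x - (c * y - f y)) * (x - y) :=
    (hmono.monovary monotone_id).sub_mul_sub_nonneg y x
  nlinarith

lemma sub_mul_sub_sum_le {n : ℕ} (hn : Odd n) {a : ℕ → ℝ} (han : a n < 0) {B : ℝ}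
    (hB : ∀ k < n, max 1 (((k : ℝ) * |a k|) ^ (n - 1)) ≤ B) (x y : ℝ) :
    (x - y) * (∑ k ∈ range (n + 1), a k * x ^ k - ∑ k ∈ range (n + 1), a k * y ^ k)
      ≤ ((n : ℝ) - 1) * max 1 (|a n| ^ ((2 : ℝ) - n)) * B * (x - y) ^ 2 :=
  sub_mul_sub_le_of_hasDerivAt_le
    (fun t => HasDerivAt.fun_sum fun k _ => (hasDerivAt_pow k t).const_mul (a k))
    (sum_mul_deriv_pow_le hn han hB) x y

lemma abs_sub_mul_pow_sub_pow_le {k E : ℕ} (hkE : k + 1 ≤ E) (x y : ℝ) :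
    |(x - y) * (x ^ k - y ^ k)| ≤ 4 * (1 + |x| ^ E + |y| ^ E) := by
  have hxE := pow_nonneg (abs_nonneg x) E
  have hyE := pow_nonneg (abs_nonneg y) E
  obtain ⟨M, hx, hy, hME⟩ : ∃ M, |x| ≤ M ∧ |y| ≤ M ∧ M ^ E ≤ |x| ^ E + |y| ^ E := by
    rcases le_total |x| |y| with h | h
    · exact ⟨|y|, h, le_rfl, by linarith⟩
    · exact ⟨|x|, le_rfl, h, by linarith⟩
  have hM : 0 ≤ M := (abs_nonneg x).trans hx
  have hxk := pow_le_pow_left₀ (abs_nonneg x) hx k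
  have hyk := pow_le_pow_left₀ (abs_nonneg y) hy k
  calc |(x - y) * (x ^ k - y ^ k)| ≤ (|x| + |y|) * (|x| ^ k + |y| ^ k) := by
        rw [abs_mul, ← abs_pow, ← abs_pow]
        gcongr <;> exact abs_sub _ _
    _ ≤ (2 * M) * (2 * M ^ k) := by gcongr <;> linarith
    _ = 4 * M ^ (k + 1) := by ring
    _ ≤ 4 * max 1 (M ^ E) := by gcongr; exact pow_le_max_one_pow hM hkE
    _ ≤ 4 * (1 + |x| ^ E + |y| ^ E) := by
        gcongr; exact max_le (by linarith) (by linarith)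

lemma integrable_sub_mul_sub_sum {α : Type*} [MeasurableSpace α] {μ : Measure α}
    [IsFiniteMeasure μ] {n E : ℕ} (hnE : n + 1 ≤ E) (a : ℕ → ℝ) {v w : α → ℝ}
    (hv : MemLp v E μ) (hw : MemLp w E μ) :
    Integrable (fun x => (v x - w x) *
      (∑ k ∈ range (n + 1), a k * v x ^ k - ∑ k ∈ range (n + 1), a k * w x ^ k))
      μ := by
  have hbound (x y : ℝ) :
      |(x - y) *
          (∑ k ∈ range (n + 1), a k * x ^ k - ∑ k ∈ range (n + 1), a k * y ^ k)|
        ≤ ∑ k ∈ range (n + 1), |a k| * (4 * (1 + |x| ^ E + |y| ^ E)) := by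
    rw [← sum_sub_distrib, mul_sum]
    refine (abs_sum_le_sum_abs _ _).trans (sum_le_sum fun k hk => ?_)
    rw [← mul_sub, mul_left_comm, abs_mul]
    gcongr
    exact abs_sub_mul_pow_sub_pow_le (by simp at hk; omega) x y
  have hdom : Integrable (fun x => 1 + |v x| ^ E + |w x| ^ E) μ :=
    ((integrable_const 1).add hv.integrable_norm_pow').add hw.integrable_norm_pow'
  refine Integrable.mono' (integrable_finsetSum _ fun k _ => (hdom.const_mul 4).const_mul |a k|)
    ?_ (ae_of_all _ fun x => hbound (v x) (w x))
  have := hv.aestronglyMeasurable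
  have := hw.aestronglyMeasurable
  fun_prop

lemma integral_sq_eq_toReal_eLpNorm_sq {α : Type*} [MeasurableSpace α] {μ : Measure α}
    {f : α → ℝ} (hf : AEStronglyMeasurable f μ) :
    ∫ x, f x ^ 2 ∂μ = (eLpNorm f 2 μ).toReal ^ 2 := by
  have := lpNorm_nnreal_eq_integral_norm_rpow (p := 2) two_ne_zero hf
  simp only [ENNReal.coe_ofNat, NNReal.coe_ofNat, Real.norm_eq_abs, Real.rpow_two, sq_abs] at this
  rw [toReal_eLpNorm hf, this]
  exact (Real.rpow_inv_natCast_pow (n := 2) (integral_nonneg fun x => sq_nonneg (f x))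
    two_ne_zero).symm

lemma volume_box_lt_top (d : ℕ) (b1 b2 : ℝ) : volume (box d b1 b2) < ⊤ := by
  simp [box, volume_pi_pi]

theorem stmt11_general
    (d : ℕ) (n : ℕ) (hn : Odd n)
    (a : ℕ → ℝ) (han : a n < 0) (b1 b2 : ℝ)
    (v w : (Fin d → ℝ) → ℝ) (hvm : Measurable v) (hwm : Measurable w)
    (hv : eLpNorm v (ENNReal.ofReal (2 * (n : ℝ) ^ 2)) (volume.restrict (box d b1 b2)) < ⊤)
    (hw : eLpNorm w (ENNReal.ofReal (2 * (n : ℝ) ^ 2)) (volume.restrict (box d b1 b2)) < ⊤) :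
    Integrable (fun x => (v x - w x) * (Fpoly d n a v x - Fpoly d n a w x))
        (volume.restrict (box d b1 b2)) ∧
      (∫ x in box d b1 b2, (v x - w x) * (Fpoly d n a v x - Fpoly d n a w x)) ≤
        ((n : ℝ) - 1) * max 1 (|a n| ^ ((2 : ℝ) - n)) *
          max 1 ((Finset.range n).sup' (Finset.nonempty_range_iff.mpr hn.pos.ne')
            fun k => ((k : ℝ) * |a k|) ^ (n - 1)) *
          lpN d b1 b2 2 (fun x => v x - w x) ^ 2 := by
  set μ := volume.restrict (box d b1 b2)
  have : IsFiniteMeasure μ := isFiniteMeasure_restrict.2 (volume_box_lt_top d b1 b2).ne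
  have hE : ENNReal.ofReal (2 * (n : ℝ) ^ 2) = ((2 * n ^ 2 : ℕ) : ENNReal) := by
    rw [← ENNReal.ofReal_natCast]; push_cast; rfl
  rw [hE] at hv hw
  have hvL : MemLp v (2 * n ^ 2 : ℕ) μ := ⟨hvm.aestronglyMeasurable, hv⟩
  have hwL : MemLp w (2 * n ^ 2 : ℕ) μ := ⟨hwm.aestronglyMeasurable, hw⟩
  have hn1 := hn.pos
  have hint := integrable_sub_mul_sub_sum (by nlinarith : n + 1 ≤ 2 * n ^ 2) a hvL hwL
  have hsq : MemLp (fun x => v x - w x) 2 μ :=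
    (hvL.sub hwL).mono_exponent (by norm_cast; nlinarith)
  have hB : ∀ k < n, max 1 (((k : ℝ) * |a k|) ^ (n - 1)) ≤
      max 1 ((range n).sup' (nonempty_range_iff.mpr hn.pos.ne')
        fun k => ((k : ℝ) * |a k|) ^ (n - 1)) := fun k hk =>
    max_le_max le_rfl (le_sup' (fun k : ℕ => ((k : ℝ) * |a k|) ^ (n - 1)) (by simpa))
  refine ⟨hint, ?_⟩
  calc _ ≤ ∫ x, _ * (v x - w x) ^ 2 ∂μ :=
        integral_mono hint (hsq.integrable_sq.const_mul _)
          fun x => sub_mul_sub_sum_le hn han hB (v x) (w x)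
    _ = _ := by
        rw [integral_const_mul, integral_sq_eq_toReal_eLpNorm_sq hsq.1, lpN, ENNReal.ofReal_ofNat]

theorem stmt11
    (T : ℝ) (hT : 0 < T) (d : ℕ) (hd : 0 < d) (n : ℕ) (hn : Odd n)
    (a : ℕ → ℝ) (han : a n < 0) (b1 b2 : ℝ) (hb : b1 < b2)
    (v w : (Fin d → ℝ) → ℝ) (hvm : Measurable v) (hwm : Measurable w)
    (hv : eLpNorm v (ENNReal.ofReal (2 * (n : ℝ) ^ 2)) (volume.restrict (box d b1 b2)) < ⊤)
    (hw : eLpNorm w (ENNReal.ofReal (2 * (n : ℝ) ^ 2)) (volume.restrict (box d b1 b2)) < ⊤) :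
    Integrable (fun x => (v x - w x) * (Fpoly d n a v x - Fpoly d n a w x))
        (volume.restrict (box d b1 b2)) ∧
      (∫ x in box d b1 b2, (v x - w x) * (Fpoly d n a v x - Fpoly d n a w x)) ≤
        ((n : ℝ) - 1) * max 1 (|a n| ^ ((2 : ℝ) - n)) *
          max 1 ((Finset.range n).sup' (Finset.nonempty_range_iff.mpr hn.pos.ne')
            fun k => ((k : ℝ) * |a k|) ^ (n - 1)) *
          lpN d b1 b2 2 (fun x => v x - w x) ^ 2 :=
  stmt11_general d n hn a han b1 b2 v w hvm hwm hv hw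
end

section
/- For every x ∈ ℝ it holds that Σ_{k=1}^{n} k a_k x^{k−1} ≤ (n−1) · max{1, |a_n|^{−(n−2)}} · max{1, max_{k∈{0,1,…,n−1}} (k|a_k|)^{n−1}}. In other words, the derivative of the polynomial f(x) = Σ_{k=0}^n a_k x^k is bounded above on all of ℝ by this constant. (This is the uniform derivative bound established within the proof of Lemma 6.7 of the paper.) -/
theorem stmt13
    (n : ℕ) (hn : Odd n) (hn3 : 3 ≤ n)
    (a : ℕ → ℝ) (han : a n < 0) (x : ℝ) :
    ∑ k ∈ Finset.Icc 1 n, (k : ℝ) * a k * x ^ (k - 1) ≤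
      ((n : ℝ) - 1) * max 1 (|a n| ^ (-((n : ℝ) - 2))) *
        max 1 ((Finset.range n).sup' (Finset.nonempty_range_iff.mpr hn.pos.ne')
          fun k => ((k : ℝ) * |a k|) ^ (n - 1)) := by
  obtain ⟨p, rfl⟩ : ∃ p, n = p + 3 := ⟨n - 3, by omega⟩
  have hne : (Finset.range (p + 3)).Nonempty := ⟨0, by simp⟩
  set b : ℝ := |a (p + 3)| with hbdef
  have hb : 0 < b := abs_pos.mpr han.ne
  set f : ℕ → ℝ := fun k => (k : ℝ) * |a k| with hf
  set m : ℝ := (Finset.range (p + 3)).sup' hne f with hmdef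
  have hm0 : (0 : ℝ) ≤ m := by
    have h0 : f 0 ≤ m := Finset.le_sup' f (show 0 ∈ Finset.range (p + 3) by simp)
    have h1 : f 0 = 0 := by simp [hf]
    linarith
  have hmk : ∀ k, k < p + 3 → (k : ℝ) * |a k| ≤ m := fun k hk =>
    Finset.le_sup' f (Finset.mem_range.mpr hk)
  set S : ℝ := (Finset.range (p + 3)).sup'
      (Finset.nonempty_range_iff.mpr (Odd.pos hn).ne') (fun k => ((k : ℝ) * |a k|) ^ (p + 3 - 1))
    with hSdef
  have hmS : m ^ (p + 2) ≤ S := by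
    obtain ⟨k, hk, hkm⟩ := Finset.exists_mem_eq_sup' hne f
    have h2 : ((k : ℝ) * |a k|) ^ (p + 3 - 1) ≤ S :=
      Finset.le_sup' (fun j : ℕ => ((j : ℝ) * |a j|) ^ (p + 3 - 1)) hk
    calc m ^ (p + 2) = ((k : ℝ) * |a k|) ^ (p + 2) := by rw [hmdef, hkm]
      _ ≤ S := h2
  set A : ℝ := max 1 (|a (p + 3)| ^ (-((↑(p + 3) : ℝ) - 2))) with hAdef
  have hA1 : (1 : ℝ) ≤ A := le_max_left _ _
  have hAb : (b ^ (p + 1))⁻¹ ≤ A := by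
    have he : (-((↑(p + 3) : ℝ) - 2)) = -((p + 1 : ℕ) : ℝ) := by push_cast; ring
    have : |a (p + 3)| ^ (-((↑(p + 3) : ℝ) - 2)) = (b ^ (p + 1))⁻¹ := by
      rw [he, Real.rpow_neg hb.le, Real.rpow_natCast]
    rw [← this]
    exact le_max_right _ _
  set T : ℝ := max 1 S with hTdef
  have hT1 : (1 : ℝ) ≤ T := le_max_left _ _
  have hmT : m ^ (p + 2) ≤ T := le_trans hmS (le_max_right _ _)
  have hev : Even (p + 2) := by
    have := Nat.Odd.sub_odd hn odd_one
    simpa using this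
  -- split off the top term
  have hsplit : ∑ k ∈ Finset.Icc 1 (p + 3), (k : ℝ) * a k * x ^ (k - 1) =
      (∑ k ∈ Finset.Icc 1 (p + 2), (k : ℝ) * a k * x ^ (k - 1)) +
        ((p + 3 : ℕ) : ℝ) * a (p + 3) * x ^ (p + 2) := by
    rw [show p + 3 = (p + 2) + 1 from rfl,
      Finset.sum_Icc_succ_top (by omega : 1 ≤ p + 2 + 1)]
    norm_num
  have hgoalform : ((↑(p + 3) : ℝ) - 1) = (p + 2 : ℝ) := by push_cast; ring
  -- term bound for lower-degree terms
  have hterm : ∀ (R : ℝ), 1 ≤ R → |x| ≤ R →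
      ∀ k ∈ Finset.Icc 1 (p + 2), (k : ℝ) * a k * x ^ (k - 1) ≤ m * R ^ (p + 1) := by
    intro R hR1 hxR k hk
    simp only [Finset.mem_Icc] at hk
    calc (k : ℝ) * a k * x ^ (k - 1) ≤ |(k : ℝ) * a k * x ^ (k - 1)| := le_abs_self _
      _ = (k : ℝ) * |a k| * |x| ^ (k - 1) := by
          rw [abs_mul, abs_mul, abs_pow, Nat.abs_cast]
      _ ≤ m * R ^ (p + 1) := by
          apply mul_le_mul (hmk k (by omega)) _ (pow_nonneg (abs_nonneg x) _) hm0
          calc |x| ^ (k - 1) ≤ R ^ (k - 1) := pow_le_pow_left₀ (abs_nonneg x) hxR _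
            _ ≤ R ^ (p + 1) := pow_le_pow_right₀ hR1 (by omega)
  have hsumb : ∀ (R : ℝ), 1 ≤ R → |x| ≤ R →
      (∑ k ∈ Finset.Icc 1 (p + 2), (k : ℝ) * a k * x ^ (k - 1)) ≤
        (p + 2 : ℝ) * (m * R ^ (p + 1)) := by
    intro R hR1 hxR
    calc (∑ k ∈ Finset.Icc 1 (p + 2), (k : ℝ) * a k * x ^ (k - 1)) ≤
        (Finset.Icc 1 (p + 2)).card • (m * R ^ (p + 1)) :=
          Finset.sum_le_card_nsmul _ _ _ (hterm R hR1 hxR)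
      _ = (p + 2 : ℝ) * (m * R ^ (p + 1)) := by
          rw [Nat.card_Icc, nsmul_eq_mul]; push_cast; ring
  rcases le_total |x| (max 1 (m / b)) with hx | hx
  · -- small |x|: leading term is nonpositive
    set r : ℝ := max 1 (m / b) with hrdef
    have hr1 : (1 : ℝ) ≤ r := le_max_left _ _
    have htop : ((p + 3 : ℕ) : ℝ) * a (p + 3) * x ^ (p + 2) ≤ 0 := by
      have hxp : (0 : ℝ) ≤ x ^ (p + 2) := hev.pow_nonneg x
      have : ((p + 3 : ℕ) : ℝ) * a (p + 3) ≤ 0 :=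
        mul_nonpos_of_nonneg_of_nonpos (by positivity) han.le
      exact mul_nonpos_of_nonpos_of_nonneg this hxp
    have hkey : m * r ^ (p + 1) ≤ A * T := by
      rcases le_total (m / b) 1 with h1 | h1
      · have hr : r = 1 := max_eq_left h1
        rw [hr, one_pow, mul_one]
        have hmTle : m ≤ T := by
          rcases le_total m 1 with h2 | h2
          · exact le_trans h2 hT1
          · exact le_trans (le_self_pow₀ h2 (by omega)) hmT
        calc m ≤ T := hmTle
          _ ≤ A * T := le_mul_of_one_le_left (by linarith) hA1
      · have hr : r = m / b := max_eq_right h1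
        have heq : m * r ^ (p + 1) = m ^ (p + 2) * (b ^ (p + 1))⁻¹ := by
          rw [hr, div_pow]
          field_simp
          ring
        rw [heq]
        calc m ^ (p + 2) * (b ^ (p + 1))⁻¹ ≤ T * A :=
            mul_le_mul hmT hAb (by positivity) (by linarith)
          _ = A * T := mul_comm _ _
    calc ∑ k ∈ Finset.Icc 1 (p + 3), (k : ℝ) * a k * x ^ (k - 1) =
        (∑ k ∈ Finset.Icc 1 (p + 2), (k : ℝ) * a k * x ^ (k - 1)) +
          ((p + 3 : ℕ) : ℝ) * a (p + 3) * x ^ (p + 2) := hsplit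
      _ ≤ (p + 2 : ℝ) * (m * r ^ (p + 1)) + 0 :=
          add_le_add (hsumb r hr1 hx) htop
      _ ≤ (p + 2 : ℝ) * (A * T) + 0 := by
          have := mul_le_mul_of_nonneg_left hkey (by positivity : (0:ℝ) ≤ (p + 2 : ℝ))
          linarith
      _ = ((↑(p + 3) : ℝ) - 1) * A * T := by rw [hgoalform]; ring
  · -- large |x|: whole derivative nonpositive
    have h1x : (1 : ℝ) ≤ |x| := le_trans (le_max_left _ _) hx
    have hmb : m ≤ b * |x| := by
      have := le_trans (le_max_right _ _) hx
      calc m = (m / b) * b := by field_simp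
        _ ≤ |x| * b := mul_le_mul_of_nonneg_right this hb.le
        _ = b * |x| := mul_comm _ _
    have ha : a (p + 3) = -b := by rw [hbdef, abs_of_neg han]; ring
    have hxp : x ^ (p + 2) = |x| ^ (p + 2) := by
      rw [← abs_pow, abs_of_nonneg (hev.pow_nonneg x)]
    have hX : (0 : ℝ) ≤ |x| ^ (p + 1) := pow_nonneg (abs_nonneg x) _
    have hLHS : ∑ k ∈ Finset.Icc 1 (p + 3), (k : ℝ) * a k * x ^ (k - 1) ≤ 0 := by
      rw [hsplit]
      have hs := hsumb |x| h1x le_rfl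
      have htop : ((p + 3 : ℕ) : ℝ) * a (p + 3) * x ^ (p + 2) =
          -(((p + 3 : ℕ) : ℝ) * (b * |x|) * |x| ^ (p + 1)) := by
        rw [ha, hxp, pow_succ]
        ring
      rw [htop]
      have h1 : m * |x| ^ (p + 1) ≤ (b * |x|) * |x| ^ (p + 1) :=
        mul_le_mul_of_nonneg_right hmb hX
      nlinarith [mul_nonneg (mul_nonneg hb.le (abs_nonneg x)) hX]
    have hRHS : (0 : ℝ) ≤ ((↑(p + 3) : ℝ) - 1) * A * T := by
      rw [hgoalform]
      positivity
    linarith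
end
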